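/- arXiv:2605.26260 — 2 statements merged into one kernel-verified Lean document; each statement's English description precedes it below -/
import Mathlib

section
/- Assume f is convex, L-smooth and μ_f-strongly convex (μ_f ≥ 0), r is proper closed convex, F = f + r has a minimizer x*, a ∈ (0,1) and μ̂ ≥ L. For one step of constant-parameter Prox-NAG-GS (x_{k+1} = (1−a)x_k + a v_k, z_{k+1} = (1−a)v_k + a x_{k+1}, v_{k+1} = prox_{(a/μ̂) r}(z_{k+1} − (a/μ̂)∇f(x_{k+1}))), one has the reduced inequality: F(v_{k+1}) − F(x*) + (μ̂/(2a))‖v_{k+1} − x*‖² ≤ (μ̂(1−a)/(2a))‖v_k − x*‖² + ((μ̂ − μ_f)/2)‖x_{k+1} − x*‖². -/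
/-!
The descent lemma bounds `f v_{k+1}` by the linearization of `f` at `x_{k+1}` plus
`L/2 ≤ μ̂/2` times `‖v_{k+1} - x_{k+1}‖²`, strong convexity bounds `f x*` from below by the same
linearization, and optimality of the proximal step gives a subgradient inequality for `r` at
`v_{k+1}` tested at `x*`. Adding the three, the gradient terms cancel, and a three-point identity
for `z_{k+1} = (1 - a) v_k + a x_{k+1}` rearranges the quadratic terms into the claimed right-hand
side plus `μ̂ (1 - a) / (2a) ‖v_k - v_{k+1}‖² ≥ 0`.
-/

open RealInnerProductSpace Set Filter Topology

lemma nonpos_of_forall_le_mul {A B : ℝ} (h : ∀ t ∈ Ioc (0 : ℝ) 1, A ≤ t * B) : A ≤ 0 := by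
  have hlim : Tendsto (fun t : ℝ => t * B) (𝓝[>] 0) (𝓝 0) := by
    simpa using (tendsto_id.mul_const B).mono_left (nhdsWithin_le_nhds (a := (0:ℝ)))
  exact ge_of_tendsto hlim (eventually_of_mem (Ioc_mem_nhdsGT one_pos) h)

section InnerProductSpace

variable {E : Type*} [NormedAddCommGroup E] [InnerProductSpace ℝ E]

lemma three_point_identity_convexComb (a : ℝ) (v x y p : E) :
    a * ‖y - x‖ ^ 2 + 2 * ⟪y - ((1 - a) • v + a • x), p - y⟫ + ‖y - p‖ ^ 2
      + (1 - a) * ‖v - y‖ ^ 2 = (1 - a) * ‖v - p‖ ^ 2 + a * ‖x - p‖ ^ 2 := by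
  have hyx : y - x = (y - p) - (x - p) := by abel
  have hvy : v - y = (v - p) - (y - p) := by abel
  have hyz : y - ((1 - a) • v + a • x) = (y - p) - (1 - a) • (v - p) - a • (x - p) := by module
  have hpy : p - y = -(y - p) := by abel
  rw [hyx, hvy, hyz, hpy]
  simp only [← real_inner_self_eq_norm_sq, inner_sub_left, inner_sub_right, inner_neg_right,
    real_inner_smul_left, real_inner_comm (v - p), real_inner_comm (x - p)]
  ring

lemma ConvexOn.le_add_inner_of_forall_le_add_norm_sq {r : E → ℝ} (hr : ConvexOn ℝ univ r)
    {c : ℝ} {w v : E} (hv : ∀ u, r v + c * ‖v - w‖ ^ 2 ≤ r u + c * ‖u - w‖ ^ 2) (u : E) :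
    r v ≤ r u + 2 * c * ⟪v - w, u - v⟫ := by
  -- Test minimality against `v + t • (u - v)` and let `t → 0⁺`.
  suffices r v - r u - 2 * c * ⟪v - w, u - v⟫ ≤ 0 by linarith
  refine nonpos_of_forall_le_mul (B := c * ‖u - v‖ ^ 2) fun t ⟨ht0, ht1⟩ => ?_
  have hconv : r ((1 - t) • v + t • u) ≤ (1 - t) * r v + t * r u :=
    hr.2 (mem_univ _) (mem_univ _) (by linarith) ht0.le (by ring)
  have hnorm : ‖(1 - t) • v + t • u - w‖ ^ 2
      = ‖v - w‖ ^ 2 + 2 * t * ⟪v - w, u - v⟫ + t ^ 2 * ‖u - v‖ ^ 2 := by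
    rw [show (1 - t) • v + t • u - w = (v - w) + t • (u - v) by module, norm_add_sq_real,
      real_inner_smul_right, norm_smul, Real.norm_eq_abs, abs_of_pos ht0, mul_pow]
    ring
  have hmin := hv ((1 - t) • v + t • u)
  rw [hnorm] at hmin
  refine le_of_mul_le_mul_left ?_ ht0
  nlinarith

lemma HasGradientAt.hasDerivAt_comp_add_smul [CompleteSpace E] {f : E → ℝ} {g x c : E} {t : ℝ}
    (hf : HasGradientAt f g (x + t • c)) :
    HasDerivAt (fun s : ℝ => f (x + s • c)) ⟪g, c⟫ t := by
  have hline : HasDerivAt (fun s : ℝ => x + s • c) c t := by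
    simpa using ((hasDerivAt_id t).smul_const c).const_add x
  simpa [InnerProductSpace.toDual_apply_apply, Function.comp_def] using
    hf.hasFDerivAt.comp_hasDerivAt t hline

theorem le_add_inner_add_half_mul_norm_sq_of_lipschitz_gradient [CompleteSpace E] {f : E → ℝ}
    {f' : E → E} (hf : ∀ x, HasGradientAt f (f' x) x) {L : ℝ}
    (hL : ∀ x y, ‖f' x - f' y‖ ≤ L * ‖x - y‖) (x y : E) :
    f y ≤ f x + ⟪f' x, y - x⟫ + L / 2 * ‖y - x‖ ^ 2 := by
  set c := y - x
  let φ : ℝ → ℝ := fun t => f (x + t • c) - t * ⟪f' x, c⟫ - L / 2 * t ^ 2 * ‖c‖ ^ 2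
  have hφ : ∀ t, HasDerivAt φ (⟪f' (x + t • c) - f' x, c⟫ - L * t * ‖c‖ ^ 2) t := by
    intro t
    have hf_line : HasDerivAt (fun s : ℝ => f (x + s • c)) ⟪f' (x + t • c), c⟫ t :=
      (hf _).hasDerivAt_comp_add_smul
    have hquad := ((hasDerivAt_pow 2 t).const_mul (L / 2)).mul_const (‖c‖ ^ 2)
    refine ((hf_line.sub ((hasDerivAt_id t).mul_const ⟪f' x, c⟫)).sub hquad).congr_deriv ?_
    rw [inner_sub_left]
    ring_nf
  have hφ' : ∀ t ∈ interior (Icc (0 : ℝ) 1), ⟪f' (x + t • c) - f' x, c⟫ - L * t * ‖c‖ ^ 2 ≤ 0 := by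
    intro t ht
    rw [interior_Icc] at ht
    have : ‖f' (x + t • c) - f' x‖ ≤ L * t * ‖c‖ := by
      simpa [norm_smul, abs_of_pos ht.1, mul_assoc] using hL (x + t • c) x
    nlinarith [real_inner_le_norm (f' (x + t • c) - f' x) c, norm_nonneg c]
  have hanti : AntitoneOn φ (Icc 0 1) :=
    antitoneOn_of_hasDerivWithinAt_nonpos (convex_Icc 0 1)
      (fun t _ => (hφ t).continuousAt.continuousWithinAt)
      (fun t _ => (hφ t).hasDerivWithinAt) hφ'
  have h01 : φ 1 ≤ φ 0 := hanti (by norm_num) (by norm_num) zero_le_one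
  have hφ0 : φ 0 = f x := by simp [φ]
  have hφ1 : φ 1 = f y - ⟪f' x, c⟫ - L / 2 * ‖c‖ ^ 2 := by simp [φ, c]
  linarith

end InnerProductSpace

theorem stmt_8_general {d : ℕ} (f : EuclideanSpace ℝ (Fin d) → ℝ)
    (f' : EuclideanSpace ℝ (Fin d) → EuclideanSpace ℝ (Fin d))
    (hdiff : ∀ x, HasGradientAt f (f' x) x)
    (L μf : ℝ)
    (hLsmooth : ∀ x y, ‖f' x - f' y‖ ≤ L * ‖x - y‖)
    (hstrong : ∀ x y, f x + ⟪f' x, y - x⟫ + μf / 2 * ‖y - x‖ ^ 2 ≤ f y)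
    (r : EuclideanSpace ℝ (Fin d) → ℝ) (hr : ConvexOn ℝ Set.univ r)
    (F : EuclideanSpace ℝ (Fin d) → ℝ) (hF : ∀ x, F x = f x + r x)
    (xstar : EuclideanSpace ℝ (Fin d))
    (a μ : ℝ) (ha : a ∈ Set.Ioo (0:ℝ) 1) (hμL : L ≤ μ) (hμ : 0 < μ)
    (vk xk1 zk1 vk1 : EuclideanSpace ℝ (Fin d))
    (hz : zk1 = (1 - a) • vk + a • xk1)
    (hprox : ∀ u, r vk1 + μ / (2 * a) * ‖vk1 - (zk1 - (a / μ) • f' xk1)‖ ^ 2 ≤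
        r u + μ / (2 * a) * ‖u - (zk1 - (a / μ) • f' xk1)‖ ^ 2) :
    (F vk1 - F xstar) + μ / (2 * a) * ‖vk1 - xstar‖ ^ 2 ≤
      μ * (1 - a) / (2 * a) * ‖vk - xstar‖ ^ 2
      + (μ - μf) / 2 * ‖xk1 - xstar‖ ^ 2 := by
  obtain ⟨ha0, ha1⟩ := ha
  have hf_lower := hstrong xk1 xstar
  rw [norm_sub_rev] at hf_lower
  set g := f' xk1
  have hf_upper : f vk1 ≤ f xk1 + ⟪g, vk1 - xk1⟫ + μ / 2 * ‖vk1 - xk1‖ ^ 2 :=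
    (le_add_inner_add_half_mul_norm_sq_of_lipschitz_gradient hdiff hLsmooth xk1 vk1).trans
      (by gcongr)
  have hr_upper : r vk1 ≤ r xstar + μ / a * ⟪vk1 - zk1, xstar - vk1⟫ + ⟪g, xstar - vk1⟫ := by
    have h := hr.le_add_inner_of_forall_le_add_norm_sq hprox xstar
    rw [sub_sub_eq_add_sub, add_sub_right_comm, inner_add_left, real_inner_smul_left] at h
    refine h.trans_eq ?_
    field_simp
    ring
  have hgrad : ⟪g, vk1 - xk1⟫ + ⟪g, xstar - vk1⟫ = ⟪g, xstar - xk1⟫ := by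
    rw [← inner_add_right, sub_add_sub_cancel']
  have hid : μ / 2 * ‖vk1 - xk1‖ ^ 2 + μ / a * ⟪vk1 - zk1, xstar - vk1⟫
      + μ / (2 * a) * ‖vk1 - xstar‖ ^ 2 + μ * (1 - a) / (2 * a) * ‖vk - vk1‖ ^ 2
      = μ * (1 - a) / (2 * a) * ‖vk - xstar‖ ^ 2 + μ / 2 * ‖xk1 - xstar‖ ^ 2 := by
    rw [hz]
    field_simp
    linear_combination three_point_identity_convexComb a vk xk1 vk1 xstar
  have hslack : 0 ≤ μ * (1 - a) / (2 * a) * ‖vk - vk1‖ ^ 2 := by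
    have : 0 ≤ 1 - a := by linarith
    positivity
  rw [hF, hF]
  linear_combination hf_upper + hf_lower + hr_upper + hgrad + hid + hslack

/-- the reduced one-step inequality under `μ̂ ≥ L`. -/
theorem stmt_8 {d : ℕ} (f : EuclideanSpace ℝ (Fin d) → ℝ)
    (f' : EuclideanSpace ℝ (Fin d) → EuclideanSpace ℝ (Fin d))
    (hdiff : ∀ x, HasGradientAt f (f' x) x)
    (L μf : ℝ) (hL : 0 ≤ L) (hμf : 0 ≤ μf)
    (hLsmooth : ∀ x y, ‖f' x - f' y‖ ≤ L * ‖x - y‖)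
    (hstrong : ∀ x y, f x + ⟪f' x, y - x⟫ + μf / 2 * ‖y - x‖ ^ 2 ≤ f y)
    (r : EuclideanSpace ℝ (Fin d) → ℝ) (hr : ConvexOn ℝ Set.univ r)
    (F : EuclideanSpace ℝ (Fin d) → ℝ) (hF : ∀ x, F x = f x + r x)
    (xstar : EuclideanSpace ℝ (Fin d)) (hmin : ∀ u, F xstar ≤ F u)
    (a μ : ℝ) (ha : a ∈ Set.Ioo (0:ℝ) 1) (hμL : L ≤ μ) (hμ : 0 < μ)
    (xk vk xk1 zk1 vk1 : EuclideanSpace ℝ (Fin d))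
    (hx : xk1 = (1 - a) • xk + a • vk)
    (hz : zk1 = (1 - a) • vk + a • xk1)
    (hprox : ∀ u, r vk1 + μ / (2 * a) * ‖vk1 - (zk1 - (a / μ) • f' xk1)‖ ^ 2 ≤
        r u + μ / (2 * a) * ‖u - (zk1 - (a / μ) • f' xk1)‖ ^ 2) :
    (F vk1 - F xstar) + μ / (2 * a) * ‖vk1 - xstar‖ ^ 2 ≤
      μ * (1 - a) / (2 * a) * ‖vk - xstar‖ ^ 2
      + (μ - μf) / 2 * ‖xk1 - xstar‖ ^ 2 :=
  stmt_8_general f f' hdiff L μf hLsmooth hstrong r hr F hF xstar a μ ha hμL hμ vk xk1 zk1 vk1 hz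
    hprox
end

section
/- Let f be convex and L-smooth, r proper closed convex, F = f + r with minimizer x*, a ∈ (0,1), μ̂ ≥ L. Define for the constant-parameter Prox-NAG-GS iterates: E_k := (F(v_k) − F(x*)) + (μ̂/(2a))‖v_k − x*‖² + (μ̂(1−a)/(2a))‖x_k − x*‖². Then for every k ≥ 0: E_{k+1} ≤ E_k − (F(v_k) − F(x*)) − (μ̂(1−a)/2)‖x_k − v_k‖². -/
/-!
Three inequalities at `x_{k+1}` combine into the reduced one-step inequality
`F(v_{k+1}) - F(x*) ≤ L/2 ‖v_{k+1} - x_{k+1}‖² + (μ/a) ⟪z_{k+1} - v_{k+1}, v_{k+1} - x*⟫`: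
the descent lemma for the `L`-smooth `f`, the gradient inequality of the convex `f` at `x*`, and
the variational inequality of the proximal step, obtained by testing the minimality of `v_{k+1}`
against `v_{k+1} + t (x* - v_{k+1})` and letting `t → 0⁺`.

Put `b = μ/(2a)`. Polarization, together with
`‖(1 - a) p + a q‖² = (1 - a) ‖p‖² + a ‖q‖² - a (1 - a) ‖p - q‖²` applied to the convex
combinations `x_{k+1} - x*`, `z_{k+1} - x*` and `z_{k+1} - v_{k+1}`, turns this into the claimed
descent up to `(L/2 - a b) ‖x_{k+1} - v_{k+1}‖² - b (1 - a) ‖v_k - v_{k+1}‖²`, which is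
nonpositive because `L ≤ μ = 2 a b`.
-/

open RealInnerProductSpace Set Filter Topology

section ProxGradient

variable {E : Type*} [NormedAddCommGroup E] [InnerProductSpace ℝ E]

theorem le_add_inner_add_of_lipschitz_gradient [CompleteSpace E] {f : E → ℝ} {f' : E → E}
    {L : ℝ} (hf : ∀ x, HasGradientAt f (f' x) x) (hf' : ∀ x y, ‖f' x - f' y‖ ≤ L * ‖x - y‖)
    (p q : E) : f q ≤ f p + ⟪f' p, q - p⟫ + L / 2 * ‖q - p‖ ^ 2 := by
  set w := q - p
  have hline (t : ℝ) : HasDerivAt (fun t : ℝ => f (p + t • w)) ⟪f' (p + t • w), w⟫ t := by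
    have hpath : HasDerivAt (fun t : ℝ => p + t • w) w t := by
      simpa using ((hasDerivAt_id t).smul_const w).const_add p
    simpa [InnerProductSpace.toDual_apply_apply, Function.comp_def] using
      (hf (p + t • w)).hasFDerivAt.comp_hasDerivAt t hpath
  have hquad (t : ℝ) : HasDerivAt (fun t : ℝ => f p + t * ⟪f' p, w⟫ + L / 2 * t ^ 2 * ‖w‖ ^ 2)
      (⟪f' p, w⟫ + L * t * ‖w‖ ^ 2) t :=
    ((((hasDerivAt_id t).mul_const ⟪f' p, w⟫).const_add (f p)).add
      (((hasDerivAt_pow 2 t).const_mul (L / 2)).mul_const (‖w‖ ^ 2))).congr_deriv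
      (by push_cast; ring)
  have hslope (t : ℝ) (ht : 0 ≤ t) : ⟪f' (p + t • w), w⟫ ≤ ⟪f' p, w⟫ + L * t * ‖w‖ ^ 2 :=
    calc ⟪f' (p + t • w), w⟫ = ⟪f' p, w⟫ + ⟪f' (p + t • w) - f' p, w⟫ := by
          rw [inner_sub_left]; ring
      _ ≤ ⟪f' p, w⟫ + ‖f' (p + t • w) - f' p‖ * ‖w‖ := by
          gcongr; exact real_inner_le_norm _ _
      _ ≤ ⟪f' p, w⟫ + L * ‖t • w‖ * ‖w‖ := by grw [hf' (p + t • w) p, add_sub_cancel_left]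
      _ = ⟪f' p, w⟫ + L * t * ‖w‖ ^ 2 := by rw [norm_smul, Real.norm_of_nonneg ht]; ring
  have hcompare := image_le_of_deriv_right_le_deriv_boundary
    (fun t _ => (hline t).continuousAt.continuousWithinAt)
    (fun t _ => (hline t).hasDerivWithinAt) (by simp)
    (fun t _ => (hquad t).continuousAt.continuousWithinAt)
    (fun t _ => (hquad t).hasDerivWithinAt) (fun t ht => hslope t ht.1)
    (right_mem_Icc.2 zero_le_one)
  simpa [w] using hcompare

theorem ConvexOn.prox_variational_inequality {r : E → ℝ} (hr : ConvexOn ℝ univ r) {c : ℝ}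
    {v w : E} (hv : ∀ u, r v + c * ‖v - w‖ ^ 2 ≤ r u + c * ‖u - w‖ ^ 2) (u : E) :
    r v ≤ r u + 2 * c * ⟪v - w, u - v⟫ := by
  set g : ℝ → ℝ := fun t => r u - r v + 2 * c * ⟪v - w, u - v⟫ + t * (c * ‖u - v‖ ^ 2)
  have hsegment : ∀ t ∈ Ioo (0 : ℝ) 1, 0 ≤ g t := by
    rintro t ⟨ht0, ht1⟩
    have hconv := hr.2 (mem_univ v) (mem_univ u) (sub_nonneg.2 ht1.le) ht0.le (sub_add_cancel 1 t)
    have hexpand : ‖(1 - t) • v + t • u - w‖ ^ 2 =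
        ‖v - w‖ ^ 2 + 2 * t * ⟪v - w, u - v⟫ + t ^ 2 * ‖u - v‖ ^ 2 := by
      rw [show (1 - t) • v + t • u - w = (v - w) + t • (u - v) by module, norm_add_sq_real,
        norm_smul, inner_smul_right, mul_pow, Real.norm_eq_abs, sq_abs]
      ring
    have hprod : 0 ≤ t * g t := by
      simp only [smul_eq_mul] at hconv
      linear_combination hv ((1 - t) • v + t • u) + hconv + c * hexpand
    exact nonneg_of_mul_nonneg_right (by simpa [mul_comm] using hprod) ht0
  have hg : Tendsto g (𝓝[>] 0) (𝓝 (g 0)) :=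
    ((continuous_const.add (continuous_id.mul continuous_const)).tendsto 0).mono_left
      nhdsWithin_le_nhds
  have hg0 := ge_of_tendsto hg (eventually_of_mem (Ioo_mem_nhdsGT one_pos) hsegment)
  simp only [g, zero_mul, add_zero] at hg0
  linarith

theorem proxGradient_step_le [CompleteSpace E] {f : E → ℝ} {f' : E → E} {L : ℝ}
    (hf : ∀ x, HasGradientAt f (f' x) x) (hf' : ∀ x y, ‖f' x - f' y‖ ≤ L * ‖x - y‖)
    (hconv : ∀ x y, f x + ⟪f' x, y - x⟫ ≤ f y) {r : E → ℝ} (hr : ConvexOn ℝ univ r)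
    {γ : ℝ} (hγ : γ ≠ 0) {x z v xstar : E}
    (hv : ∀ u, r v + 1 / (2 * γ) * ‖v - (z - γ • f' x)‖ ^ 2 ≤
      r u + 1 / (2 * γ) * ‖u - (z - γ • f' x)‖ ^ 2) :
    f v + r v - (f xstar + r xstar) ≤ L / 2 * ‖v - x‖ ^ 2 + γ⁻¹ * ⟪z - v, v - xstar⟫ := by
  have hprox := hr.prox_variational_inequality hv xstar
  have hprox_inner : 2 * (1 / (2 * γ)) * ⟪v - (z - γ • f' x), xstar - v⟫ =
      γ⁻¹ * ⟪z - v, v - xstar⟫ - ⟪f' x, v - xstar⟫ := by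
    rw [show v - (z - γ • f' x) = γ • f' x - (z - v) by abel,
      show xstar - v = -(v - xstar) by abel, inner_neg_right, inner_sub_left,
      real_inner_smul_left]
    field_simp
    ring
  have hupper := le_add_inner_add_of_lipschitz_gradient hf hf' x v
  have hlower := hconv x xstar
  have hsplit : ⟪f' x, v - x⟫ = ⟪f' x, xstar - x⟫ + ⟪f' x, v - xstar⟫ := by
    rw [← inner_add_right, sub_add_sub_cancel']
  linarith

theorem norm_one_sub_smul_add_smul_sub_sq (a : ℝ) (p q o : E) :
    ‖(1 - a) • p + a • q - o‖ ^ 2 =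
      (1 - a) * ‖p - o‖ ^ 2 + a * ‖q - o‖ ^ 2 - a * (1 - a) * ‖p - q‖ ^ 2 := by
  rw [show (1 - a) • p + a • q - o = (p - o) + a • (q - p) by module,
    show p - q = -(q - p) by abel, norm_neg, show q - o = (p - o) + (q - p) by abel,
    norm_add_sq_real, norm_add_sq_real, norm_smul, inner_smul_right, mul_pow,
    Real.norm_eq_abs, sq_abs]
  ring

theorem energy_le_of_step_le {a b L D : ℝ} (ha : a ≤ 1) (hb : 0 ≤ b) (hL : L ≤ 2 * a * b)
    {x v x' z' v' xstar : E} (hx' : x' = (1 - a) • x + a • v) (hz' : z' = (1 - a) • v + a • x')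
    (hD : D ≤ L / 2 * ‖v' - x'‖ ^ 2 + 2 * b * ⟪z' - v', v' - xstar⟫) :
    D + b * ‖v' - xstar‖ ^ 2 + b * (1 - a) * ‖x' - xstar‖ ^ 2 ≤
      b * ‖v - xstar‖ ^ 2 + b * (1 - a) * ‖x - xstar‖ ^ 2 - a * b * (1 - a) * ‖x - v‖ ^ 2 := by
  have hx'_sq := norm_one_sub_smul_add_smul_sub_sq a x v xstar
  have hz'_sq := norm_one_sub_smul_add_smul_sub_sq a v x' xstar
  have hz'v'_sq := norm_one_sub_smul_add_smul_sub_sq a v x' v'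
  rw [← hx'] at hx'_sq
  rw [← hz'] at hz'_sq hz'v'_sq
  have hpolar := norm_add_sq_real (z' - v') (v' - xstar)
  rw [sub_add_sub_cancel] at hpolar
  have hquad : L / 2 * ‖v' - x'‖ ^ 2 ≤ a * b * ‖x' - v'‖ ^ 2 := by
    rw [norm_sub_rev]; gcongr; linarith
  have hgap : 0 ≤ b * (1 - a) * ‖v - v'‖ ^ 2 := by
    have : 0 ≤ 1 - a := by linarith
    positivity
  linear_combination hD + hquad + hgap - b * hpolar + b * hz'_sq - b * hz'v'_sq + b * hx'_sq

end ProxGradient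

theorem stmt_13_general {d : ℕ} (f : EuclideanSpace ℝ (Fin d) → ℝ)
    (f' : EuclideanSpace ℝ (Fin d) → EuclideanSpace ℝ (Fin d))
    (hdiff : ∀ x, HasGradientAt f (f' x) x)
    (L : ℝ) (hL : 0 < L)
    (hLsmooth : ∀ x y, ‖f' x - f' y‖ ≤ L * ‖x - y‖)
    (hconv : ∀ x y, f x + ⟪f' x, y - x⟫ ≤ f y)
    (r : EuclideanSpace ℝ (Fin d) → ℝ) (hr : ConvexOn ℝ Set.univ r)
    (F : EuclideanSpace ℝ (Fin d) → ℝ) (hF : ∀ x, F x = f x + r x)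
    (xstar : EuclideanSpace ℝ (Fin d))
    (a μ : ℝ) (ha : a ∈ Set.Ioo (0:ℝ) 1) (hμL : L ≤ μ)
    (x v z : ℕ → EuclideanSpace ℝ (Fin d))
    (hx : ∀ k, x (k + 1) = (1 - a) • x k + a • v k)
    (hz : ∀ k, z (k + 1) = (1 - a) • v k + a • x (k + 1))
    (hprox : ∀ k, ∀ u,
      r (v (k + 1)) + μ / (2 * a) * ‖v (k + 1) - (z (k + 1) - (a / μ) • f' (x (k + 1)))‖ ^ 2 ≤
        r u + μ / (2 * a) * ‖u - (z (k + 1) - (a / μ) • f' (x (k + 1)))‖ ^ 2)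
    (En : ℕ → ℝ)
    (hEn : ∀ k, En k = (F (v k) - F xstar) + μ / (2 * a) * ‖v k - xstar‖ ^ 2
        + μ * (1 - a) / (2 * a) * ‖x k - xstar‖ ^ 2) :
    ∀ k, En (k + 1) ≤ En k - (F (v k) - F xstar) - μ * (1 - a) / 2 * ‖x k - v k‖ ^ 2 := by
  obtain ⟨ha0, ha1⟩ := ha
  have hμ : 0 < μ := hL.trans_le hμL
  have hweight : μ / (2 * a) = 1 / (2 * (a / μ)) := by field_simp
  have hstep_inv : (a / μ)⁻¹ = 2 * (μ / (2 * a)) := by field_simp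
  have hab : a * (μ / (2 * a)) = μ / 2 := by field_simp
  intro k
  have hstep := proxGradient_step_le hdiff hLsmooth hconv hr (div_ne_zero ha0.ne' hμ.ne')
    (xstar := xstar) (by simpa only [hweight] using hprox k)
  rw [hstep_inv] at hstep
  have henergy := energy_le_of_step_le ha1.le (by positivity) (by linarith) (hx k) (hz k) hstep
  rw [hEn, hEn, hF, hF]
  linear_combination henergy - (1 - a) * ‖x k - v k‖ ^ 2 * hab

/-- descent inequality for the augmented energy in the convex case. -/
theorem stmt_13 {d : ℕ} (f : EuclideanSpace ℝ (Fin d) → ℝ)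
    (f' : EuclideanSpace ℝ (Fin d) → EuclideanSpace ℝ (Fin d))
    (hdiff : ∀ x, HasGradientAt f (f' x) x)
    (L : ℝ) (hL : 0 < L)
    (hLsmooth : ∀ x y, ‖f' x - f' y‖ ≤ L * ‖x - y‖)
    (hconv : ∀ x y, f x + ⟪f' x, y - x⟫ ≤ f y)
    (r : EuclideanSpace ℝ (Fin d) → ℝ) (hr : ConvexOn ℝ Set.univ r)
    (F : EuclideanSpace ℝ (Fin d) → ℝ) (hF : ∀ x, F x = f x + r x)
    (xstar : EuclideanSpace ℝ (Fin d)) (hmin : ∀ u, F xstar ≤ F u)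
    (a μ : ℝ) (ha : a ∈ Set.Ioo (0:ℝ) 1) (hμL : L ≤ μ)
    (x v z : ℕ → EuclideanSpace ℝ (Fin d))
    (hx : ∀ k, x (k + 1) = (1 - a) • x k + a • v k)
    (hz : ∀ k, z (k + 1) = (1 - a) • v k + a • x (k + 1))
    (hprox : ∀ k, ∀ u,
      r (v (k + 1)) + μ / (2 * a) * ‖v (k + 1) - (z (k + 1) - (a / μ) • f' (x (k + 1)))‖ ^ 2 ≤
        r u + μ / (2 * a) * ‖u - (z (k + 1) - (a / μ) • f' (x (k + 1)))‖ ^ 2)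
    (En : ℕ → ℝ)
    (hEn : ∀ k, En k = (F (v k) - F xstar) + μ / (2 * a) * ‖v k - xstar‖ ^ 2
        + μ * (1 - a) / (2 * a) * ‖x k - xstar‖ ^ 2) :
    ∀ k, En (k + 1) ≤ En k - (F (v k) - F xstar) - μ * (1 - a) / 2 * ‖x k - v k‖ ^ 2 :=
  stmt_13_general f f' hdiff L hL hLsmooth hconv r hr F hF xstar a μ ha hμL x v z hx hz hprox En hEn
end
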